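/- arXiv:2209.03992 — 7 statements merged into one kernel-verified Lean document; each statement's English description precedes it below -/
import Mathlib

section
/- Let D : ℕ → ℚ satisfy D(0) = 0 and, with the convention D(-1) = 0, the recurrence (L+1)·D(L) = ∑_{k=1}^{L+1} (D(k-2) + 1 + D(L-k)) for all L ≥ 1. Then D(L) = (2L+1)/3 for all L ≥ 1. -/
private def fdim (m : ℕ) : ℚ := if m = 0 then 0 else (2 * m + 1) / 3

private lemma sum_range_fdim (n : ℕ) :
    ∑ m ∈ Finset.range (n + 1), fdim m = ((n : ℚ) ^ 2 + 2 * n) / 3 := by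
  induction n with
  | zero => simp [fdim]
  | succ n ih =>
    rw [Finset.sum_range_succ, ih]
    have : fdim (n + 1) = (2 * ((n : ℚ) + 1) + 1) / 3 := by
      simp [fdim]
    rw [this]
    push_cast
    ring

/-- Average number of dimers in random sequential covering of an interval of `L` sites:
with `D 0 = 0` (and the convention `D (-1) = 0` realized by truncated subtraction) and the
recurrence `(L+1) D L = ∑_{k=1}^{L+1} (D (k-2) + 1 + D (L-k))`, one has `D L = (2L+1)/3`. -/
theorem dimer_average (D : ℕ → ℚ) (h0 : D 0 = 0)
    (hrec : ∀ L : ℕ, 1 ≤ L →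
      ((L : ℚ) + 1) * D L = ∑ k ∈ Finset.Icc 1 (L + 1), (D (k - 2) + 1 + D (L - k))) :
    ∀ L : ℕ, 1 ≤ L → D L = (2 * L + 1) / 3 := by
  intro L
  induction L using Nat.strong_induction_on with
  | _ L IH =>
    intro hL
    have hD : ∀ m : ℕ, m < L → D m = fdim m := by
      intro m hm
      rcases Nat.eq_zero_or_pos m with hm0 | hm1
      · simp [hm0, h0, fdim]
      · rw [IH m hm hm1, fdim]
        simp only [if_neg (by omega : ¬ m = 0)]
    have key := hrec L hL
    -- rewrite the sum
    have hsum : ∑ k ∈ Finset.Icc 1 (L + 1), (D (k - 2) + 1 + D (L - k))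
        = ∑ k ∈ Finset.Icc 1 (L + 1), (fdim (k - 2) + 1 + fdim (L - k)) := by
      apply Finset.sum_congr rfl
      intro k hk
      rw [Finset.mem_Icc] at hk
      rw [hD (k - 2) (by omega), hD (L - k) (by omega)]
    rw [hsum] at key
    have hsplit : ∑ k ∈ Finset.Icc 1 (L + 1), (fdim (k - 2) + 1 + fdim (L - k))
        = (∑ k ∈ Finset.Icc 1 (L + 1), fdim (k - 2)) + (L + 1)
          + ∑ k ∈ Finset.Icc 1 (L + 1), fdim (L - k) := by
      rw [Finset.sum_add_distrib, Finset.sum_add_distrib, Finset.sum_const]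
      simp [Nat.card_Icc]
    -- compute each piece
    have e1 : ∑ k ∈ Finset.Icc 1 (L + 1), fdim (k - 2)
        = ∑ j ∈ Finset.range L, fdim j := by
      rw [← Finset.Ico_add_one_right_eq_Icc, Finset.sum_Ico_eq_sum_range]
      have : L + 1 + 1 - 1 = L + 1 := by omega
      rw [this]
      rw [Finset.sum_range_succ']
      have h0' : fdim (1 + 0 - 2) = 0 := by norm_num [fdim]
      rw [h0', add_zero]
      apply Finset.sum_congr rfl
      intro i _
      congr 1
      omega
    have e2 : ∑ k ∈ Finset.Icc 1 (L + 1), fdim (L - k)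
        = ∑ j ∈ Finset.range L, fdim j := by
      rw [← Finset.Ico_add_one_right_eq_Icc, Finset.sum_Ico_eq_sum_range]
      have : L + 1 + 1 - 1 = L + 1 := by omega
      rw [this]
      rw [Finset.sum_range_succ]
      have h0' : fdim (L - (1 + L)) = 0 := by
        have : L - (1 + L) = 0 := by omega
        rw [this]; norm_num [fdim]
      rw [h0', add_zero]
      rw [← Finset.sum_range_reflect]
      apply Finset.sum_congr rfl
      intro i hi
      rw [Finset.mem_range] at hi
      congr 1
      omega
    have e3 : ∑ j ∈ Finset.range L, fdim j = ((L : ℚ) ^ 2 - 1) / 3 := by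
      obtain ⟨n, rfl⟩ := Nat.exists_eq_add_of_le hL
      rw [show 1 + n = n + 1 by ring, sum_range_fdim]
      push_cast
      ring
    rw [hsplit, e1, e2, e3] at key
    have hL1 : ((L : ℚ) + 1) ≠ 0 := by positivity
    field_simp at key ⊢
    nlinarith [key]
end

section
/- Let p : ℕ → ℚ satisfy p(L) = 1/(L+1) + (1/(L+1))·∑_{k=2}^{L} p(k-1) for all L ≥ 1. Then p(L) = 1/2 for all L ≥ 1. -/
/-! The recurrence expresses `p L` through `p 1, …, p (L - 1)` only, and the constant `1 / 2`
solves it because `1 + (L - 1) / 2 = (L + 1) / 2`; strong induction on `L` does the rest. -/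

open Finset

theorem Nat.cast_card_Icc_two {R : Type*} [Ring R] {L : ℕ} (hL : 1 ≤ L) :
    ((Icc 2 L).card : R) = L - 1 := by
  rw [Nat.card_Icc, show L + 1 - 2 = L - 1 by omega, Nat.cast_sub hL, Nat.cast_one]

/-- The probability that the left-most dimer is `(1,2)` in random sequential dimer covering of
an interval with `L` sites equals `1/2`. -/
theorem no_left_overhang (p : ℕ → ℚ)
    (hrec : ∀ L : ℕ, 1 ≤ L →
      p L = 1 / ((L : ℚ) + 1) + (1 / ((L : ℚ) + 1)) * ∑ k ∈ Finset.Icc 2 L, p (k - 1)) :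
    ∀ L : ℕ, 1 ≤ L → p L = 1 / 2 := by
  intro L
  induction L using Nat.strong_induction_on with
  | _ L ih =>
    intro hL
    have hsum : ∑ k ∈ Icc 2 L, p (k - 1) = ∑ _k ∈ Icc 2 L, (1 / 2 : ℚ) :=
      sum_congr rfl fun k hk => by
        rw [mem_Icc] at hk
        exact ih (k - 1) (by omega) (by omega)
    rw [hrec L hL, hsum, sum_const, nsmul_eq_mul, Nat.cast_card_Icc_two hL]
    field_simp
    ring
end

section
/- Let m : ℕ → ℚ satisfy m(0) = 1 and (2n+1)·m(n) = ∑_{k=0}^{n-1} m(k)·m(n-1-k) for n ≥ 1. Then the generating function m(x) = ∑_{k≥0} m(k) x^k equals tan(√x)/√x, i.e., m(n) equals the coefficient of x^n in the Taylor expansion of tan(√x)/√x. -/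
/-!
With `A = ∑ m n Xⁿ`, the recurrence is the Riccati equation `A + 2XA' = 1 + XA²`, so the
odd series `T = X·A(X²)` satisfies `T' = 1 + T²` and `T(0) = 0`. Then
`(cos·T - sin)' = T·(cos·T - sin)` forces `cos·T = sin` as formal power series. On the other
hand `tan` is holomorphic on the disc `|z| < π/2`, and multiplying its Taylor series by that of
`cos` gives that of `sin`; cancelling `cos` in the domain `ℂ⟦X⟧` identifies the Taylor series of
`tan` with `T`, which therefore converges to `tan z` on the whole disc. Finally put `z = √x`.
-/

open Real Finset Filter Topology PowerSeries Nat
open FormalMultilinearSeries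
  (ofScalars ofScalars_apply_eq coeff_ofScalars ofScalars_series_injective)

namespace PowerSeries

section Formal

variable {R : Type*} [CommRing R]

theorem eq_zero_of_derivative_eq_mul [IsAddTorsionFree R] {F G : R⟦X⟧}
    (hF : d⁄dX R F = G * F) (h0 : constantCoeff F = 0) : F = 0 := by
  ext n
  induction n using Nat.strong_induction_on with
  | _ n ih =>
    rcases n with _ | k
    · simpa using h0
    · have h := congrArg (coeff k) hF
      rw [coeff_derivative, coeff_mul, sum_eq_zero fun ij hij ↦ by
        rw [ih ij.2 (by have := mem_antidiagonal.mp hij; omega), map_zero, mul_zero]] at h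
      rw [map_zero]
      refine nsmul_right_injective k.succ_ne_zero ?_
      simpa [nsmul_eq_mul, mul_comm] using h

theorem riccati_of_recurrence {a : ℕ → R} (h0 : a 0 = 1)
    (hrec : ∀ n : ℕ, 1 ≤ n →
      (2 * (n : R) + 1) * a n = ∑ k ∈ range n, a k * a (n - 1 - k)) :
    mk a + 2 • (X * d⁄dX R (mk a)) = 1 + X * mk a ^ 2 := by
  ext (_ | n)
  · simp [h0]
  · have h := hrec (n + 1) (by omega)
    rw [Nat.add_sub_cancel] at h
    rw [map_add, map_nsmul, coeff_succ_X_mul, map_add, coeff_succ_X_mul]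
    simp only [coeff_derivative, coeff_mk, pow_two, coeff_mul, coeff_one, Nat.succ_ne_zero,
      if_false, zero_add, Nat.sum_antidiagonal_eq_sum_range_succ_mk]
    push_cast at h ⊢
    linear_combination h

theorem derivative_expand (p : ℕ) (hp : p ≠ 0) (A : R⟦X⟧) :
    d⁄dX R (expand p hp A) = expand p hp (d⁄dX R A) * ((p : R⟦X⟧) * X ^ (p - 1)) := by
  simp only [expand_apply]
  rw [derivative_subst (HasSubst.X_pow hp), derivative_pow, derivative_X, mul_one]

theorem derivative_X_mul_expand_two_eq_one_add_sq {A : R⟦X⟧}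
    (hA : A + 2 • (X * d⁄dX R A) = 1 + X * A ^ 2) :
    d⁄dX R (X * expand 2 two_ne_zero A) = 1 + (X * expand 2 two_ne_zero A) ^ 2 := by
  have hE := congrArg (expand 2 two_ne_zero) hA
  simp only [map_add, map_nsmul, map_mul, map_pow, map_one, expand_X] at hE
  rw [Derivation.leibniz, derivative_expand, derivative_X]
  simp only [smul_eq_mul, nsmul_eq_mul] at hE ⊢
  linear_combination hE

variable {A : Type*} [CommRing A] [Algebra ℚ A]

theorem derivative_sin : d⁄dX A (sin A) = cos A := by
  ext n
  rw [coeff_derivative, sin, cos, coeff_mk, coeff_mk]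
  rcases Nat.even_or_odd n with ⟨k, rfl⟩ | ⟨k, rfl⟩
  · have h1 : (k + k + 1) / 2 = (k + k) / 2 := by omega
    rw [if_neg (by simp), if_pos (by simp), ← Nat.cast_succ, ← map_natCast (algebraMap ℚ A),
      ← map_mul, h1, Nat.factorial_succ]
    congr 1
    push_cast
    field_simp
  · rw [if_pos (by rw [Nat.even_add_one]; simp), if_neg (by simp), zero_mul]

theorem derivative_cos : d⁄dX A (cos A) = -sin A := by
  ext n
  rw [coeff_derivative, sin, cos, map_neg, coeff_mk, coeff_mk]
  rcases Nat.even_or_odd n with ⟨k, rfl⟩ | ⟨k, rfl⟩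
  · rw [if_neg (by simp), if_pos (by simp), zero_mul, neg_zero]
  · have h1 : (2 * k + 1 + 1) / 2 = (2 * k + 1) / 2 + 1 := by omega
    rw [if_pos (by rw [Nat.even_add_one]; simp), if_neg (by simp), ← Nat.cast_succ,
      ← map_natCast (algebraMap ℚ A), ← map_mul, ← map_neg, h1, Nat.factorial_succ]
    congr 1
    push_cast
    field_simp
    ring

theorem cos_mul_eq_sin_of_derivative_eq_one_add_sq [IsAddTorsionFree A] {T : A⟦X⟧}
    (hT : d⁄dX A T = 1 + T ^ 2) (h0 : constantCoeff T = 0) : cos A * T = sin A := by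
  rw [← sub_eq_zero]
  refine eq_zero_of_derivative_eq_mul (G := T) ?_ ?_
  · rw [map_sub, Derivation.leibniz, derivative_sin, derivative_cos, hT, smul_eq_mul, smul_eq_mul]
    ring
  · simp [h0, sin]

end Formal

section Analytic

variable {𝕜 : Type*} [NontriviallyNormedField 𝕜] {f g : 𝕜 → 𝕜} {a b : 𝕜⟦X⟧}

theorem hasFPowerSeriesAt_ofScalars_iff :
    HasFPowerSeriesAt f (ofScalars 𝕜 (coeff · a)) 0 ↔
      ∀ᶠ z in 𝓝 0, HasSum (fun n ↦ coeff n a * z ^ n) (f z) := by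
  simp only [hasFPowerSeriesAt_iff, coeff_ofScalars, smul_eq_mul, mul_comm, zero_add]

theorem eq_of_hasFPowerSeriesAt (ha : HasFPowerSeriesAt f (ofScalars 𝕜 (coeff · a)) 0)
    (hb : HasFPowerSeriesAt f (ofScalars 𝕜 (coeff · b)) 0) : a = b :=
  ext <| congrFun <| ofScalars_series_injective 𝕜 𝕜 <| ha.eq_formalMultilinearSeries hb

theorem hasFPowerSeriesAt_mul [CompleteSpace 𝕜]
    (hf : HasFPowerSeriesAt f (ofScalars 𝕜 (coeff · a)) 0)
    (hg : HasFPowerSeriesAt g (ofScalars 𝕜 (coeff · b)) 0) :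
    HasFPowerSeriesAt (fun z ↦ f z * g z) (ofScalars 𝕜 (coeff · (a * b))) 0 := by
  rw [hasFPowerSeriesAt_ofScalars_iff]
  have summable_norm {c : 𝕜⟦X⟧} {h : 𝕜 → 𝕜}
      (hc : HasFPowerSeriesAt h (ofScalars 𝕜 (coeff · c)) 0) :
      ∀ᶠ z in 𝓝 0, Summable fun n ↦ ‖coeff n c * z ^ n‖ := by
    filter_upwards [Metric.eball_mem_nhds (0 : 𝕜) hc.radius_pos] with z hz
    simpa [ofScalars_apply_eq, mul_comm] using (ofScalars 𝕜 (coeff · c)).summable_norm_apply hz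
  filter_upwards [hasFPowerSeriesAt_ofScalars_iff.mp hf, hasFPowerSeriesAt_ofScalars_iff.mp hg,
    summable_norm hf, summable_norm hg] with z hfz hgz hfn hgn
  have hprod := (summable_norm_sum_mul_antidiagonal_of_summable_norm hfn hgn).of_norm.hasSum
  rw [← tsum_mul_tsum_eq_tsum_sum_antidiagonal_of_summable_norm hfn hgn, hfz.tsum_eq,
    hgz.tsum_eq] at hprod
  refine hprod.congr_fun fun n ↦ ?_
  rw [coeff_mul, sum_mul]
  refine sum_congr rfl fun ij hij ↦ ?_
  rw [← mem_antidiagonal.mp hij, pow_add]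
  ring

end Analytic

theorem hasSum_coeff_cos_mul_pow (z : ℂ) :
    HasSum (fun n ↦ coeff n (cos ℂ) * z ^ n) (Complex.cos z) := by
  rw [← (mul_right_injective₀ two_ne_zero).hasSum_iff fun n hn ↦ ?_]
  · refine (Complex.hasSum_cos z).congr_fun fun k ↦ ?_
    simp [cos, Nat.mul_div_cancel_left k two_pos, div_mul_eq_mul_div]
  · obtain ⟨k, rfl | rfl⟩ := Nat.even_or_odd' n
    · exact absurd ⟨k, rfl⟩ hn
    · simp [cos]

theorem hasSum_coeff_sin_mul_pow (z : ℂ) :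
    HasSum (fun n ↦ coeff n (sin ℂ) * z ^ n) (Complex.sin z) := by
  have hodd : (fun k : ℕ ↦ 2 * k + 1).Injective := fun _ _ h ↦ by simpa using h
  rw [← hodd.hasSum_iff fun n hn ↦ ?_]
  · refine (Complex.hasSum_sin z).congr_fun fun k ↦ ?_
    have : (2 * k + 1) / 2 = k := by omega
    simp [sin, this, div_mul_eq_mul_div]
  · obtain ⟨k, rfl | rfl⟩ := Nat.even_or_odd' n
    · simp [sin]
    · exact absurd ⟨k, rfl⟩ hn

end PowerSeries

theorem Complex.cos_ne_zero_of_norm_lt {z : ℂ} (hz : ‖z‖ < π / 2) : Complex.cos z ≠ 0 := by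
  refine Complex.cos_ne_zero_iff.mpr fun k hk ↦ hz.not_ge ?_
  have hk1 : (1 : ℝ) ≤ |2 * (k : ℝ) + 1| := by
    exact_mod_cast Int.one_le_abs (by omega : 2 * k + 1 ≠ 0)
  have hnorm : ‖z‖ = |2 * (k : ℝ) + 1| * (π / 2) := by
    rw [hk, show (2 * (k : ℂ) + 1) * π / 2 = ((2 * k + 1 : ℝ) * (π / 2) : ℝ) by push_cast; ring,
      Complex.norm_real, norm_mul, Real.norm_eq_abs, Real.norm_of_nonneg (by positivity)]
  rw [hnorm]
  exact le_mul_of_one_le_left (by positivity) hk1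

theorem Complex.differentiableOn_tan_ball :
    DifferentiableOn ℂ Complex.tan (Metric.ball 0 (π / 2)) :=
  fun _ hz ↦ (Complex.differentiableAt_tan.mpr <|
    Complex.cos_ne_zero_of_norm_lt (mem_ball_zero_iff.mp hz)).differentiableWithinAt

noncomputable def taylorPowerSeries (f : ℂ → ℂ) : ℂ⟦X⟧ :=
  mk fun n ↦ (n ! : ℂ)⁻¹ * iteratedDeriv n f 0

theorem hasSum_coeff_taylorPowerSeries_mul_pow {f : ℂ → ℂ} {r : ℝ}
    (hf : DifferentiableOn ℂ f (Metric.ball 0 r)) {z : ℂ} (hz : z ∈ Metric.ball 0 r) :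
    HasSum (fun n ↦ coeff n (taylorPowerSeries f) * z ^ n) (f z) :=
  (Complex.hasSum_taylorSeries_on_ball hf hz).congr_fun fun n ↦ by
    simp [taylorPowerSeries]; ring

theorem hasFPowerSeriesAt_taylorPowerSeries {f : ℂ → ℂ} {r : ℝ}
    (hf : DifferentiableOn ℂ f (Metric.ball 0 r)) (hr : 0 < r) :
    HasFPowerSeriesAt f (ofScalars ℂ (coeff · (taylorPowerSeries f))) 0 := by
  rw [hasFPowerSeriesAt_ofScalars_iff]
  filter_upwards [Metric.ball_mem_nhds 0 hr] with z hz using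
    hasSum_coeff_taylorPowerSeries_mul_pow hf hz

theorem hasSum_coeff_X_mul_expand_two_mul_pow_iff {S : Type*} [CommRing S] [TopologicalSpace S]
    {A : S⟦X⟧} {z s : S} :
    HasSum (fun n ↦ coeff n (X * expand 2 two_ne_zero A) * z ^ n) s ↔
      HasSum (fun k ↦ coeff k A * z ^ (2 * k + 1)) s := by
  have hodd : (fun k : ℕ ↦ 2 * k + 1).Injective := fun _ _ h ↦ by simpa using h
  rw [← hodd.hasSum_iff fun n hn ↦ ?_]
  · simp only [Function.comp_def, coeff_succ_X_mul, coeff_expand_mul]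
  · obtain ⟨k, rfl | rfl⟩ := Nat.even_or_odd' n
    · rcases k with _ | k
      · simp
      · rw [show 2 * (k + 1) = (2 * k + 1) + 1 by ring, coeff_succ_X_mul,
          coeff_expand_of_not_dvd _ _ _ (by omega), zero_mul]
    · exact absurd ⟨k, rfl⟩ hn

theorem cos_mul_taylorPowerSeries_tan : cos ℂ * taylorPowerSeries Complex.tan = sin ℂ := by
  have hcos : HasFPowerSeriesAt Complex.cos (ofScalars ℂ (coeff · (cos ℂ))) 0 :=
    hasFPowerSeriesAt_ofScalars_iff.mpr (.of_forall hasSum_coeff_cos_mul_pow)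
  have hsin : HasFPowerSeriesAt Complex.sin (ofScalars ℂ (coeff · (sin ℂ))) 0 :=
    hasFPowerSeriesAt_ofScalars_iff.mpr (.of_forall hasSum_coeff_sin_mul_pow)
  have htan :=
    hasFPowerSeriesAt_taylorPowerSeries Complex.differentiableOn_tan_ball (by positivity)
  refine eq_of_hasFPowerSeriesAt ((hasFPowerSeriesAt_mul hcos htan).congr ?_) hsin
  filter_upwards [Metric.ball_mem_nhds 0 (by positivity : 0 < π / 2)] with z hz
  rw [Complex.tan_eq_sin_div_cos,
    mul_div_cancel₀ _ (Complex.cos_ne_zero_of_norm_lt (mem_ball_zero_iff.mp hz))]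

theorem taylorPowerSeries_tan_eq_of_recurrence {a : ℕ → ℂ} (h0 : a 0 = 1)
    (hrec : ∀ n : ℕ, 1 ≤ n →
      (2 * (n : ℂ) + 1) * a n = ∑ k ∈ range n, a k * a (n - 1 - k)) :
    taylorPowerSeries Complex.tan = X * expand 2 two_ne_zero (mk a) := by
  have hT : cos ℂ * (X * expand 2 two_ne_zero (mk a)) = sin ℂ :=
    cos_mul_eq_sin_of_derivative_eq_one_add_sq
      (derivative_X_mul_expand_two_eq_one_add_sq (riccati_of_recurrence h0 hrec)) (by simp)
  have hcos : cos ℂ ≠ 0 := fun h ↦ by simpa [PowerSeries.cos] using congrArg (coeff 0) h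
  exact mul_left_cancel₀ hcos (cos_mul_taylorPowerSeries_tan.trans hT.symm)

theorem hasSum_mul_sq_pow_of_recurrence {m : ℕ → ℚ} (h0 : m 0 = 1)
    (hrec : ∀ n : ℕ, 1 ≤ n →
      (2 * (n : ℚ) + 1) * m n = ∑ k ∈ range n, m k * m (n - 1 - k))
    {y : ℝ} (hy0 : y ≠ 0) (hy : |y| < π / 2) :
    HasSum (fun n ↦ (m n : ℝ) * (y ^ 2) ^ n) (Real.tan y / y) := by
  have hrecℂ (n : ℕ) (hn : 1 ≤ n) :
      (2 * (n : ℂ) + 1) * m n = ∑ k ∈ range n, (m k : ℂ) * m (n - 1 - k) := by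
    exact_mod_cast congrArg (Rat.cast : ℚ → ℂ) (hrec n hn)
  have h := hasSum_coeff_taylorPowerSeries_mul_pow Complex.differentiableOn_tan_ball
    (z := y) (by simpa using hy)
  rw [taylorPowerSeries_tan_eq_of_recurrence (a := fun n ↦ (m n : ℂ)) (by simp [h0]) hrecℂ,
    hasSum_coeff_X_mul_expand_two_mul_pow_iff] at h
  refine Complex.hasSum_ofReal.mp ?_
  rw [Complex.ofReal_div, Complex.ofReal_tan]
  push_cast
  refine (h.div_const y).congr_fun fun k ↦ ?_
  have : (y : ℂ) ≠ 0 := by exact_mod_cast hy0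
  simp only [coeff_mk]
  field_simp
  ring

/-- The probabilities `m n` of a minimally congested dimer covering of an interval of `2n`
sites, defined by `m 0 = 1` and `(2n+1) m n = ∑_{k=0}^{n-1} m k · m (n-1-k)`, have the
generating function `∑ m n xⁿ = tan(√x)/√x` (on the disc of convergence `x < (π/2)²`). -/
theorem minimal_congestion_gf (m : ℕ → ℚ) (h0 : m 0 = 1)
    (hrec : ∀ n : ℕ, 1 ≤ n →
      (2 * (n : ℚ) + 1) * m n = ∑ k ∈ Finset.range n, m k * m (n - 1 - k)) :
    ∀ x : ℝ, 0 < x → x < (π / 2) ^ 2 →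
      ∑' n : ℕ, (m n : ℝ) * x ^ n = Real.tan (Real.sqrt x) / Real.sqrt x := by
  intro x hx0 hx
  have hy : |√x| < π / 2 := by
    rw [abs_of_nonneg (Real.sqrt_nonneg x), Real.sqrt_lt' (by positivity)]
    exact hx
  have h := hasSum_mul_sq_pow_of_recurrence h0 hrec (Real.sqrt_pos.mpr hx0).ne' hy
  rw [Real.sq_sqrt hx0.le] at h
  exact h.tsum_eq
end

section
/- Let m(n) be defined by m(0)=1 and (2n+1)·m(n) = ∑_{k=0}^{n-1} m(k)·m(n-1-k). Then m(n) ∼ 2·(2/π)^{2n+2} as n → ∞, i.e., m(n)·(π/2)^{2n+2} → 2. -/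
/-!
Both `s n = m n (π/2)^(2n+2)` and `t n = 2 λ(2n+2)`, where `λ(s) = ∑_{a ≥ 0} (2a+1)^(-s)`,
solve the recurrence `(2n+1) s n = ∑_{k<n} s k s (n-1-k)` with `s 0 = π²/4 = 2 λ(2)`, so they
coincide; and `λ(2n+2) → 1`. For `t` the recurrence is the identity
`∑_{k<n} λ(2k+2) λ(2n-2k) = (n + 1/2) λ(2n+2)`. Expand the left side as a double series over
pairs `(a, b)` and sum the geometric series in `k`: the diagonal gives `n λ(2n+2)`, and each
off-diagonal term splits into `(2a+1)^(-2n) / ((2b+1)² - (2a+1)²)` plus its transpose. Summing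
over `b` first leaves `(2a+1)^(-2n-2) / 4`, since `∑_{b ≠ a} 1/((2b+1)² - (2a+1)²)` telescopes
to `1/(4(2a+1)²)`; the transpose gives the same total because the double series converges
absolutely.
-/

open Real Filter Finset Topology

def ConvolutionRecurrence {K : Type*} [Field K] (s : ℕ → K) : Prop :=
  ∀ n : ℕ, 1 ≤ n → (2 * (n : K) + 1) * s n = ∑ k ∈ range n, s k * s (n - 1 - k)

namespace ConvolutionRecurrence

variable {K L : Type*} [Field K] [Field L] {s t : ℕ → K}

theorem map (hs : ConvolutionRecurrence s) (f : K →+* L) : ConvolutionRecurrence (f ∘ s) := by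
  intro n hn
  simpa [map_sum, map_ofNat] using congrArg f (hs n hn)

theorem mul_pow_succ (hs : ConvolutionRecurrence s) (r : K) :
    ConvolutionRecurrence (fun n => s n * r ^ (n + 1)) := by
  intro n hn
  have hsplit : ∀ k ∈ range n, s k * r ^ (k + 1) * (s (n - 1 - k) * r ^ (n - 1 - k + 1)) =
      s k * s (n - 1 - k) * r ^ (n + 1) := fun k hk => by
    rw [show n + 1 = (k + 1) + (n - 1 - k + 1) by have := mem_range.1 hk; omega, pow_add]
    ring
  rw [sum_congr rfl hsplit, ← sum_mul, ← hs n hn]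
  ring

theorem eq [CharZero K] (hs : ConvolutionRecurrence s) (ht : ConvolutionRecurrence t)
    (h0 : s 0 = t 0) : s = t := by
  funext n
  induction n using Nat.strong_induction_on with
  | _ n ih =>
    rcases Nat.eq_zero_or_pos n with rfl | hn
    · exact h0
    · have hodd : (2 * (n : K) + 1) ≠ 0 := by exact_mod_cast (by omega : 2 * n + 1 ≠ 0)
      refine mul_left_cancel₀ hodd ?_
      rw [hs n hn, ht n hn]
      exact sum_congr rfl fun k hk => by
        have := mem_range.1 hk
        rw [ih k this, ih (n - 1 - k) (by omega)]

end ConvolutionRecurrence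

theorem hasSum_sub_succ_of_antitone {f : ℕ → ℝ} (hf : Antitone f)
    (hlim : Tendsto f atTop (𝓝 0)) : HasSum (fun n => f n - f (n + 1)) (f 0) := by
  refine (hasSum_iff_tendsto_nat_of_nonneg (fun n => sub_nonneg.2 (hf n.le_succ)) _).2 ?_
  simp_rw [sum_range_sub']
  simpa using tendsto_const_nhds.sub hlim

theorem hasSum_sub_add_of_antitone {f : ℕ → ℝ} (hf : Antitone f)
    (hlim : Tendsto f atTop (𝓝 0)) (M : ℕ) :
    HasSum (fun n => f n - f (n + M)) (∑ j ∈ range M, f j) := by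
  have h := hasSum_sum fun j (_ : j ∈ range M) =>
    hasSum_sub_succ_of_antitone (f := fun n => f (n + j))
      (fun x y hxy => hf (Nat.add_le_add_right hxy j)) (hlim.comp (tendsto_add_atTop_nat j))
  simp only [zero_add] at h
  convert h using 2 with n
  have := sum_range_sub' (fun j => f (n + j)) M
  simp only [add_zero] at this
  rw [← this]
  simp only [add_assoc, add_comm 1]

theorem sum_range_pow_succ_mul_pow_sub {K : Type*} [Field K] {x y : K} (h : x ≠ y) (n : ℕ) :
    ∑ k ∈ range n, x ^ (k + 1) * y ^ (n - k) = x * y * (x ^ n - y ^ n) / (x - y) := by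
  rw [eq_div_iff (sub_ne_zero.2 h), ← geom_sum₂_mul, ← mul_assoc, mul_sum]
  congr 1
  refine sum_congr rfl fun k hk => ?_
  rw [show n - k = n - 1 - k + 1 by have := mem_range.1 hk; omega]
  ring

noncomputable def invOddSq (a : ℕ) : ℝ := ((2 * a + 1) ^ 2)⁻¹

-- `oddLambda m = λ(2m)`.
noncomputable def oddLambda (m : ℕ) : ℝ := ∑' a, invOddSq a ^ m

lemma invOddSq_pos (a : ℕ) : 0 < invOddSq a := by unfold invOddSq; positivity

lemma invOddSq_le_one (a : ℕ) : invOddSq a ≤ 1 :=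
  inv_le_one_of_one_le₀ (one_le_pow₀ (by linarith [(a.cast_nonneg : (0 : ℝ) ≤ a)]))

lemma invOddSq_lt_one {a : ℕ} (ha : a ≠ 0) : invOddSq a < 1 := by
  have : (1 : ℝ) ≤ a := Nat.one_le_cast.2 (Nat.one_le_iff_ne_zero.2 ha)
  exact inv_lt_one_of_one_lt₀ (by nlinarith)

lemma hasSum_invOddSq : HasSum invOddSq (π ^ 2 / 8) := by
  have hζ := hasSum_zeta_two
  have hodd : Summable fun k : ℕ => 1 / ((2 * k + 1 : ℕ) : ℝ) ^ 2 :=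
    hζ.summable.comp_injective fun i j h => by simpa using h
  have heven : HasSum (fun k : ℕ => 1 / ((2 * k : ℕ) : ℝ) ^ 2) (1 / 4 * (π ^ 2 / 6)) :=
    (hζ.mul_left (1 / 4)).congr_fun fun k => by push_cast; ring
  have hsplit := hζ.unique
    (HasSum.even_add_odd (f := fun n : ℕ => 1 / (n : ℝ) ^ 2) heven hodd.hasSum)
  have hodd_eq : (fun k : ℕ => 1 / ((2 * k + 1 : ℕ) : ℝ) ^ 2) = invOddSq := by
    funext k; simp [invOddSq]
  rw [hodd_eq] at hodd hsplit
  rw [show π ^ 2 / 8 = ∑' k, invOddSq k by linarith]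
  exact hodd.hasSum

lemma summable_invOddSq_pow {m : ℕ} (hm : m ≠ 0) : Summable fun a => invOddSq a ^ m :=
  hasSum_invOddSq.summable.of_nonneg_of_le (fun a => (pow_pos (invOddSq_pos a) m).le)
    fun a => pow_le_of_le_one (invOddSq_pos a).le (invOddSq_le_one a) hm

lemma oddLambda_one : oddLambda 1 = π ^ 2 / 8 := by
  simpa [oddLambda] using hasSum_invOddSq.tsum_eq

lemma tendsto_oddLambda : Tendsto oddLambda atTop (𝓝 1) := by
  have hlim : ∀ a, Tendsto (fun m => invOddSq a ^ m) atTop (𝓝 (if a = 0 then 1 else 0)) := by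
    intro a
    split_ifs with ha
    · simp [ha, invOddSq]
    · exact tendsto_pow_atTop_nhds_zero_of_lt_one (invOddSq_pos a).le (invOddSq_lt_one ha)
  have hbound : ∀ᶠ m in atTop, ∀ a, ‖invOddSq a ^ m‖ ≤ invOddSq a :=
    eventually_atTop.2 ⟨1, fun m hm a => by
      rw [Real.norm_of_nonneg (pow_pos (invOddSq_pos a) m).le]
      exact pow_le_of_le_one (invOddSq_pos a).le (invOddSq_le_one a) (by omega)⟩
  show Tendsto (fun m => ∑' a, invOddSq a ^ m) atTop (𝓝 1)
  simpa using tendsto_tsum_of_dominated_convergence hasSum_invOddSq.summable hlim hbound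

lemma hasSum_oddLambda {m : ℕ} (hm : m ≠ 0) :
    HasSum (fun a => invOddSq a ^ m) (oddLambda m) :=
  (summable_invOddSq_pow hm).hasSum

lemma sum_range_one_div_sub_add_one_div_add (a : ℕ) :
    ∑ b ∈ range a, (1 / ((a : ℝ) - b) + 1 / ((a : ℝ) + b + 1)) =
      ∑ j ∈ range (2 * a), 1 / ((j : ℝ) + 1) := by
  rw [two_mul, sum_range_add, sum_add_distrib, ← sum_range_reflect _ a]
  congr 1 <;> refine sum_congr rfl fun b hb => ?_
  · rw [Nat.sub_sub, Nat.cast_sub (by have := mem_range.1 hb; omega)]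
    push_cast; ring_nf
  · push_cast; ring_nf

lemma oddSq_ne {a b : ℕ} (hab : a ≠ b) : (2 * (a : ℝ) + 1) ^ 2 ≠ (2 * b + 1) ^ 2 := by
  intro h
  have := (pow_left_inj₀ (by positivity) (by positivity) two_ne_zero).1 h
  exact hab (by exact_mod_cast (by linarith : (a : ℝ) = b))

noncomputable def oddSqGapInv (a b : ℕ) : ℝ :=
  if a = b then 0 else ((2 * b + 1 : ℝ) ^ 2 - (2 * a + 1) ^ 2)⁻¹

lemma hasSum_oddSqGapInv (a : ℕ) : HasSum (oddSqGapInv a) (invOddSq a / 4) := by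
  have htail : HasSum (fun d => oddSqGapInv a (d + (a + 1)))
      ((∑ j ∈ range (2 * a + 1), 1 / ((j : ℝ) + 1)) / (4 * (2 * a + 1))) := by
    refine ((hasSum_sub_add_of_antitone (f := fun d : ℕ => 1 / ((d : ℝ) + 1))
      (fun x y hxy => one_div_le_one_div_of_le (by positivity) (by gcongr))
      tendsto_one_div_add_atTop_nhds_zero_nat (2 * a + 1)).div_const _).congr_fun fun d => ?_
    rw [oddSqGapInv, if_neg (by omega)]
    push_cast
    rw [show (2 * ((d : ℝ) + (a + 1)) + 1) ^ 2 - (2 * a + 1) ^ 2 =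
      4 * (d + 1) * (d + 1 + (2 * a + 1)) by ring]
    field_simp
    ring
  have hhead : ∑ b ∈ range (a + 1), oddSqGapInv a b =
      -((∑ j ∈ range (2 * a), 1 / ((j : ℝ) + 1)) / (4 * (2 * a + 1))) := by
    rw [sum_range_succ, oddSqGapInv, if_pos rfl, add_zero,
      ← sum_range_one_div_sub_add_one_div_add, sum_div, ← sum_neg_distrib]
    refine sum_congr rfl fun b hb => ?_
    have hba : (b : ℝ) + 1 ≤ a := by exact_mod_cast mem_range.1 hb
    rw [oddSqGapInv, if_neg (by have := mem_range.1 hb; omega),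
      show (2 * (b : ℝ) + 1) ^ 2 - (2 * a + 1) ^ 2 = -(4 * (a - b) * (a + b + 1)) by ring]
    have : (0 : ℝ) < a - b := by linarith
    field_simp
    ring
  have hsum : invOddSq a / 4 + (∑ j ∈ range (2 * a), 1 / ((j : ℝ) + 1)) / (4 * (2 * a + 1)) =
      (∑ j ∈ range (2 * a + 1), 1 / ((j : ℝ) + 1)) / (4 * (2 * a + 1)) := by
    rw [sum_range_succ, invOddSq]
    push_cast
    field_simp
    ring
  rw [← hasSum_nat_add_iff' (a + 1), hhead, sub_neg_eq_add, hsum]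
  exact htail

lemma oddSqGapInv_self (a : ℕ) : oddSqGapInv a a = 0 := if_pos rfl

lemma oddSqGapInv_nonneg {a b : ℕ} (h : a ≤ b) : 0 ≤ oddSqGapInv a b := by
  unfold oddSqGapInv
  split_ifs
  · exact le_rfl
  · have : (a : ℝ) ≤ b := by exact_mod_cast h
    exact inv_nonneg.2 (sub_nonneg.2 (by gcongr))

lemma abs_oddSqGapInv_le {a b : ℕ} (h : b < a) : |oddSqGapInv a b| ≤ 1 / (a + 1) := by
  have hba : (b : ℝ) + 1 ≤ a := by exact_mod_cast h
  rw [oddSqGapInv, if_neg h.ne', abs_inv, abs_of_neg (by nlinarith), one_div]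
  exact inv_anti₀ (by positivity) (by nlinarith)

noncomputable def convTerm (n : ℕ) (p : ℕ × ℕ) : ℝ :=
  ∑ k ∈ range n, invOddSq p.1 ^ (k + 1) * invOddSq p.2 ^ (n - k)

noncomputable def gapTerm (n : ℕ) (p : ℕ × ℕ) : ℝ := invOddSq p.1 ^ n * oddSqGapInv p.1 p.2

lemma convTerm_nonneg (n : ℕ) (p : ℕ × ℕ) : 0 ≤ convTerm n p :=
  sum_nonneg fun _ _ => by have := invOddSq_pos p.1; have := invOddSq_pos p.2; positivity

lemma convTerm_diag (n a : ℕ) : convTerm n (a, a) = n * invOddSq a ^ (n + 1) := by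
  have h : ∀ k ∈ range n, invOddSq a ^ (k + 1) * invOddSq a ^ (n - k) = invOddSq a ^ (n + 1) :=
    fun k hk => by rw [← pow_add]; congr 1; have := mem_range.1 hk; omega
  dsimp only [convTerm]
  rw [sum_congr rfl h, sum_const, card_range, nsmul_eq_mul]

lemma convTerm_of_ne (n : ℕ) {a b : ℕ} (hab : a ≠ b) :
    convTerm n (a, b) = gapTerm n (a, b) + gapTerm n (b, a) := by
  have hne : invOddSq a ≠ invOddSq b := fun h => oddSq_ne hab (inv_injective h)
  rw [convTerm, sum_range_pow_succ_mul_pow_sub hne, gapTerm, gapTerm, oddSqGapInv, oddSqGapInv,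
    if_neg hab, if_neg (Ne.symm hab)]
  have := sub_ne_zero.2 (oddSq_ne hab)
  have := sub_ne_zero.2 (oddSq_ne (Ne.symm hab))
  simp only [invOddSq]
  field_simp
  ring

lemma hasSum_convTerm (n : ℕ) :
    HasSum (convTerm n) (∑ k ∈ range n, oddLambda (k + 1) * oddLambda (n - k)) := by
  refine hasSum_sum (f := fun k (p : ℕ × ℕ) => invOddSq p.1 ^ (k + 1) * invOddSq p.2 ^ (n - k))
    fun k hk => ?_
  have h1 := hasSum_oddLambda (Nat.succ_ne_zero k)
  have h2 := hasSum_oddLambda (m := n - k) (by have := mem_range.1 hk; omega)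
  exact HasSum.mul (f := fun a => invOddSq a ^ (k + 1)) (g := fun b => invOddSq b ^ (n - k)) h1 h2
    (h1.summable.mul_of_nonneg h2.summable
      (fun a => (pow_pos (invOddSq_pos a) _).le) (fun b => (pow_pos (invOddSq_pos b) _).le))

noncomputable def gapBound (n : ℕ) (p : ℕ × ℕ) : ℝ :=
  if p.2 < p.1 then invOddSq p.1 ^ n / (p.1 + 1) else 0

lemma gapBound_nonneg (n : ℕ) (p : ℕ × ℕ) : 0 ≤ gapBound n p := by
  have := invOddSq_pos p.1
  unfold gapBound
  split_ifs <;> positivity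

lemma summable_gapBound {n : ℕ} (hn : n ≠ 0) : Summable (gapBound n) := by
  have hfib : ∀ a, ∀ b ∉ range a, gapBound n (a, b) = 0 :=
    fun a b hb => if_neg (by simpa using hb)
  refine (summable_prod_of_nonneg (gapBound_nonneg n)).2
    ⟨fun a => summable_of_ne_finset_zero (hfib a), ?_⟩
  refine (summable_invOddSq_pow hn).of_nonneg_of_le
    (fun a => tsum_nonneg fun b => gapBound_nonneg n (a, b)) fun a => ?_
  have ha : (a : ℝ) / (a + 1) ≤ 1 := div_le_one_of_le₀ (by linarith) (by positivity)
  calc ∑' b, gapBound n (a, b) = ∑ b ∈ range a, invOddSq a ^ n / (a + 1) := by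
        rw [tsum_eq_sum (hfib a)]
        exact sum_congr rfl fun b hb => if_pos (mem_range.1 hb)
    _ = a / (a + 1) * invOddSq a ^ n := by rw [sum_const, card_range, nsmul_eq_mul]; ring
    _ ≤ invOddSq a ^ n := mul_le_of_le_one_left (pow_pos (invOddSq_pos a) n).le ha

lemma abs_gapTerm_le_of_lt (n : ℕ) {a b : ℕ} (h : b < a) :
    |gapTerm n (a, b)| ≤ gapBound n (a, b) := by
  have hpos := pow_pos (invOddSq_pos a) n
  rw [gapTerm, gapBound, if_pos h, abs_mul, abs_of_pos hpos, div_eq_mul_one_div]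
  exact mul_le_mul_of_nonneg_left (abs_oddSqGapInv_le h) hpos.le

-- Above the diagonal `gapTerm` is positive, and `convTerm_of_ne` bounds it by `convTerm` plus
-- its transpose, which lies below the diagonal.
lemma abs_gapTerm_le (n : ℕ) (p : ℕ × ℕ) :
    |gapTerm n p| ≤ convTerm n p + gapBound n p + gapBound n p.swap := by
  obtain ⟨a, b⟩ := p
  rw [Prod.swap_prod_mk]
  have hc := convTerm_nonneg n (a, b)
  have h1 := gapBound_nonneg n (a, b)
  have h2 := gapBound_nonneg n (b, a)
  rcases lt_trichotomy a b with hab | rfl | hab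
  · have hpos : 0 ≤ gapTerm n (a, b) :=
      mul_nonneg (pow_pos (invOddSq_pos a) n).le (oddSqGapInv_nonneg hab.le)
    rw [abs_of_nonneg hpos]
    linarith [convTerm_of_ne n hab.ne, neg_le_of_abs_le (abs_gapTerm_le_of_lt n hab)]
  · simp only [gapTerm, oddSqGapInv_self, mul_zero, abs_zero]
    linarith
  · linarith [abs_gapTerm_le_of_lt n hab]

lemma summable_gapTerm {n : ℕ} (hn : n ≠ 0) : Summable (gapTerm n) :=
  Summable.of_norm_bounded (((hasSum_convTerm n).summable.add (summable_gapBound hn)).add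
    ((Equiv.prodComm ℕ ℕ).summable_iff.2 (summable_gapBound hn))) (abs_gapTerm_le n)

lemma hasSum_gapTerm {n : ℕ} (hn : n ≠ 0) : HasSum (gapTerm n) (oddLambda (n + 1) / 4) := by
  have hfib : ∀ a, HasSum (fun b => gapTerm n (a, b)) (invOddSq a ^ (n + 1) / 4) := fun a => by
    simpa [gapTerm, pow_succ, mul_div_assoc] using
      (hasSum_oddSqGapInv a).mul_left (invOddSq a ^ n)
  have h := (summable_gapTerm hn).hasSum.prod_fiberwise hfib
  rw [← h.unique ((hasSum_oddLambda (m := n + 1) (by omega)).div_const 4)]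
  exact (summable_gapTerm hn).hasSum

lemma hasSum_convTerm_diag (n : ℕ) :
    HasSum (fun p : ℕ × ℕ => if p.1 = p.2 then n * invOddSq p.1 ^ (n + 1) else 0)
      (n * oddLambda (n + 1)) := by
  refine (Function.Injective.hasSum_iff (g := fun a : ℕ => (a, a))
    (fun a b h => congrArg Prod.fst h) fun p hp => if_neg fun h => hp ⟨p.1, ?_⟩).1 ?_
  · exact Prod.ext rfl h
  · exact ((hasSum_oddLambda (m := n + 1) (by omega)).mul_left (n : ℝ)).congr_fun
      fun a => by simp

theorem sum_range_oddLambda_mul {n : ℕ} (hn : n ≠ 0) :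
    ∑ k ∈ range n, oddLambda (k + 1) * oddLambda (n - k) = (n + 1 / 2) * oddLambda (n + 1) := by
  have hdecomp : ∀ p : ℕ × ℕ, convTerm n p =
      (if p.1 = p.2 then n * invOddSq p.1 ^ (n + 1) else 0) + gapTerm n p + gapTerm n p.swap := by
    rintro ⟨a, b⟩
    by_cases hab : a = b
    · subst hab
      simp [convTerm_diag, gapTerm, oddSqGapInv_self]
    · simp [convTerm_of_ne n hab, hab]
  have hsplit := ((hasSum_convTerm_diag n).add (hasSum_gapTerm hn)).add
    ((Equiv.prodComm ℕ ℕ).hasSum_iff.2 (hasSum_gapTerm hn))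
  rw [(hasSum_convTerm n).unique (hsplit.congr_fun hdecomp)]
  ring

theorem convolutionRecurrence_oddLambda :
    ConvolutionRecurrence fun n => 2 * oddLambda (n + 1) := by
  intro n hn
  have hterm : ∀ k ∈ range n, 2 * oddLambda (k + 1) * (2 * oddLambda (n - 1 - k + 1)) =
      4 * (oddLambda (k + 1) * oddLambda (n - k)) := fun k hk => by
    rw [show n - 1 - k + 1 = n - k by have := mem_range.1 hk; omega]
    ring
  rw [sum_congr rfl hterm, ← mul_sum, sum_range_oddLambda_mul (by omega)]
  ring

/-- The probability `m n` of a minimally congested dimer covering of an interval of `2n`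
sites satisfies `m n ≃ 2 (2/π)^{2n+2}` as `n → ∞`, i.e. `m n (π/2)^{2n+2} → 2`. -/
theorem minimal_congestion_asymptotics (m : ℕ → ℚ) (h0 : m 0 = 1)
    (hrec : ∀ n : ℕ, 1 ≤ n →
      (2 * (n : ℚ) + 1) * m n = ∑ k ∈ Finset.range n, m k * m (n - 1 - k)) :
    Tendsto (fun n : ℕ => (m n : ℝ) * (π / 2) ^ (2 * n + 2)) atTop (nhds 2) := by
  have hscaled : ConvolutionRecurrence fun n => (m n : ℝ) * (π / 2) ^ (2 * n + 2) := by
    have := (ConvolutionRecurrence.map hrec (Rat.castHom ℝ)).mul_pow_succ ((π / 2) ^ 2)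
    simpa [← pow_mul, mul_add] using this
  have heq := hscaled.eq convolutionRecurrence_oddLambda (by simp [h0, oddLambda_one]; ring)
  rw [heq]
  simpa using (tendsto_oddLambda.comp (tendsto_add_atTop_nat 1)).const_mul 2
end

section
/- The probability that random sequential covering by dimers of an interval with L sites terminates in the maximally congested configuration with N = L dimers equals M(L) = ∏_{j=2}^{L+1} (2/j) = 2^L/(L+1)!. -/
/-!
No interval holds more dimers than sites, so in the first-dimer recursion for `P (n + 1) (n + 1)`
every term vanishes except those where the first dimer sits at either end, leaving a fully
congested interval of `n` sites. Hence `(n + 2) P(n + 1, n + 1) = 2 P(n, n)`, which telescopes to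
`2 ^ n / (n + 1)!`.
-/

namespace DimerCovering

open Finset

variable {P : ℕ → ℤ → ℚ}

/-- The first dimer lands at one of the `L + 1` positions `k`, leaving independent intervals of
`k - 2` and `L - k` sites for the remaining `N - 1` dimers. -/
def SatisfiesFirstDimerRecursion (P : ℕ → ℤ → ℚ) : Prop :=
  ∀ (N : ℕ) (L : ℤ), 1 ≤ L →
    ((L : ℚ) + 1) * P N L =
      ∑ k ∈ Icc (1 : ℤ) (L + 1), ∑ a ∈ range N, P a (k - 2) * P (N - 1 - a) (L - k)

def VanishesPastDiagonal (P : ℕ → ℤ → ℚ) (L : ℤ) : Prop :=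
  ∀ N : ℕ, 1 ≤ N → L < N → P N L = 0

theorem mul_eq_zero_of_vanishesPastDiagonal {a b : ℕ} {i j : ℤ}
    (hi : VanishesPastDiagonal P i) (hj : VanishesPastDiagonal P j)
    (h : (1 ≤ a ∧ i < a) ∨ (1 ≤ b ∧ j < b)) : P a i * P b j = 0 := by
  rcases h with ⟨ha, hia⟩ | ⟨hb, hjb⟩
  · rw [hi a ha hia, zero_mul]
  · rw [hj b hb hjb, mul_zero]

theorem vanishesPastDiagonal (hbase : ∀ N : ℕ, 1 ≤ N → P N (-1) = 0 ∧ P N 0 = 0)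
    (hrec : SatisfiesFirstDimerRecursion P) {L : ℤ} (hL : -1 ≤ L) :
    VanishesPastDiagonal P L := by
  induction L using Int.strongRec (m := 1) with
  | lt L hL1 =>
    intro N hN _
    obtain rfl | rfl : L = -1 ∨ L = 0 := by omega
    exacts [(hbase N hN).1, (hbase N hN).2]
  | ge L hL1 ih =>
    intro N hN hLN
    have hsum : ∑ k ∈ Icc (1 : ℤ) (L + 1), ∑ a ∈ range N,
        P a (k - 2) * P (N - 1 - a) (L - k) = 0 := by
      refine sum_eq_zero fun k hk => sum_eq_zero fun a ha => ?_
      rw [mem_Icc] at hk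
      rw [mem_range] at ha
      -- the two sub-intervals have `L - 2` sites in total but must hold `N - 1 ≥ L` dimers
      exact mul_eq_zero_of_vanishesPastDiagonal (ih _ (by omega) (by omega))
        (ih _ (by omega) (by omega)) (by omega)
    have hL_cast : (1 : ℚ) ≤ L := by exact_mod_cast hL1
    have hpos : (L : ℚ) + 1 ≠ 0 := by linarith
    simpa [hsum, hpos] using hrec N L hL1

theorem sum_range_mul_of_neg_one_left (hm1 : P 0 (-1) = 1)
    (hbase : ∀ N : ℕ, 1 ≤ N → P N (-1) = 0 ∧ P N 0 = 0) (n : ℕ) (L : ℤ) :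
    ∑ a ∈ range (n + 1), P a (-1) * P (n - a) L = P n L := by
  rw [sum_eq_single_of_mem 0 (by simp)]
  · simp [hm1]
  · intro a _ ha
    rw [(hbase a (by omega)).1, zero_mul]

theorem sum_range_mul_of_neg_one_right (hm1 : P 0 (-1) = 1)
    (hbase : ∀ N : ℕ, 1 ≤ N → P N (-1) = 0 ∧ P N 0 = 0) (n : ℕ) (L : ℤ) :
    ∑ a ∈ range (n + 1), P a L * P (n - a) (-1) = P n L := by
  rw [sum_eq_single_of_mem n (by simp)]
  · simp [hm1]
  · intro a ha han
    rw [mem_range] at ha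
    rw [(hbase (n - a) (by omega)).1, mul_zero]

/-- Only a dimer at either end of the interval leaves room for a fully congested remainder. -/
theorem diagonal_succ (hm1 : P 0 (-1) = 1)
    (hbase : ∀ N : ℕ, 1 ≤ N → P N (-1) = 0 ∧ P N 0 = 0)
    (hrec : SatisfiesFirstDimerRecursion P) (n : ℕ) :
    ((n : ℚ) + 2) * P (n + 1) (n + 1) = 2 * P n n := by
  have hsplit : Icc (1 : ℤ) ((n : ℤ) + 1 + 1) =
      insert 1 (insert ((n : ℤ) + 2) (Icc 2 ((n : ℤ) + 1))) := by
    ext k; simp only [mem_Icc, mem_insert]; omega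
  have hmiddle : ∑ k ∈ Icc (2 : ℤ) (n + 1), ∑ a ∈ range (n + 1),
      P a (k - 2) * P (n + 1 - 1 - a) (n + 1 - k) = 0 := by
    refine sum_eq_zero fun k hk => sum_eq_zero fun a ha => ?_
    rw [mem_Icc] at hk
    rw [mem_range] at ha
    exact mul_eq_zero_of_vanishesPastDiagonal (vanishesPastDiagonal hbase hrec (by omega))
      (vanishesPastDiagonal hbase hrec (by omega)) (by omega)
  have h := hrec (n + 1) ((n : ℤ) + 1) (by omega)
  rw [hsplit, sum_insert (by simp; omega), sum_insert (by simp), hmiddle] at h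
  simp only [Int.cast_add, Int.cast_natCast, Int.cast_one, Int.reduceSub, Int.reduceNeg,
    add_tsub_cancel_right, add_sub_add_left_eq_sub, add_zero,
    sum_range_mul_of_neg_one_left hm1 hbase, sum_range_mul_of_neg_one_right hm1 hbase] at h
  linarith

theorem diagonal_eq_two_pow_div_factorial (hm1 : P 0 (-1) = 1) (h00 : P 0 0 = 1)
    (hbase : ∀ N : ℕ, 1 ≤ N → P N (-1) = 0 ∧ P N 0 = 0)
    (hrec : SatisfiesFirstDimerRecursion P) (n : ℕ) :
    P n n = 2 ^ n / ((n + 1).factorial : ℚ) := by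
  induction n with
  | zero => simpa using h00
  | succ n ih =>
    have hstep := diagonal_succ hm1 hbase hrec n
    have hfac : ((n + 1).factorial : ℚ) ≠ 0 := by positivity
    rw [ih, mul_div_assoc', eq_div_iff hfac] at hstep
    rw [Nat.factorial_succ, Nat.cast_mul, eq_div_iff (by positivity)]
    push_cast at hstep ⊢
    linear_combination hstep

end DimerCovering

open DimerCovering in
/-- Full counting statistics of random sequential dimer covering: `P N L` is the probability
that the covering of an interval of `L` sites terminates with exactly `N` dimers, determined
by conditioning on the first dimer position. The probability of the maximally congested
configuration is `P L L = 2^L / (L+1)!`. -/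
theorem maximal_congestion_dimers (P : ℕ → ℤ → ℚ)
    (hm1 : P 0 (-1) = 1) (h00 : P 0 0 = 1)
    (hbase : ∀ N : ℕ, 1 ≤ N → P N (-1) = 0 ∧ P N 0 = 0)
    (hrec : ∀ (N : ℕ) (L : ℤ), 1 ≤ L →
      ((L : ℚ) + 1) * P N L =
        ∑ k ∈ Finset.Icc (1 : ℤ) (L + 1), ∑ a ∈ Finset.range N,
          P a (k - 2) * P (N - 1 - a) (L - k)) :
    ∀ L : ℕ, 1 ≤ L → P L (L : ℤ) = 2 ^ L / (Nat.factorial (L + 1) : ℚ) :=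
  fun L _ => diagonal_eq_two_pow_div_factorial hm1 h00 hbase hrec L
end

section
/- Fix ℓ ≥ 2. Let D : ℤ → ℚ with D(L) = 0 for L ≤ 0 and (L+ℓ−1)·D(L) = ∑_{k=1}^{L+ℓ−1} (D(k−ℓ) + 1 + D(L−k)) for L ≥ 1. Then D(L) = (2L + ℓ − 1)/(ℓ + 1) for all L ≥ 1. -/
/-! Both sums in the recurrence are the partial sum `S (L - 1) = ∑_{j=1}^{L-1} D j`: shifting
`k ↦ k - ℓ` resp. reflecting `k ↦ L - k` maps the range of summation onto `[1 - ℓ, L - 1]`, and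
`D` vanishes on the non-positive part. Hence `(L + ℓ - 1) D L = 2 S (L - 1) + (L + ℓ - 1)`, which
determines `D L` from the earlier values, and the linear function `(2L + ℓ - 1)/(ℓ + 1)` satisfies
it because its partial sums are `(L - 1)(L + ℓ - 1)/(ℓ + 1)`. -/

open Finset

namespace Int

variable {M : Type*} [AddCommMonoid M]

theorem sum_Icc_comp_sub_right (f : ℤ → M) (a b c : ℤ) :
    ∑ k ∈ Icc a b, f (k - c) = ∑ j ∈ Icc (a - c) (b - c), f j :=
  sum_nbij' (· - c) (· + c) (by simp) (by simp; omega) (by simp) (by simp) (by simp)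

theorem sum_Icc_comp_sub_left (f : ℤ → M) (a b c : ℤ) :
    ∑ k ∈ Icc a b, f (c - k) = ∑ j ∈ Icc (c - b) (c - a), f j :=
  sum_nbij' (c - ·) (c - ·) (by simp; omega) (by simp; omega) (by simp) (by simp) (by simp)

theorem sum_Icc_eq_sum_Icc_one {f : ℤ → M} (hf : ∀ j ≤ 0, f j = 0) {a : ℤ} (ha : a ≤ 1)
    (b : ℤ) : ∑ j ∈ Icc a b, f j = ∑ j ∈ Icc 1 b, f j :=
  (sum_subset (Icc_subset_Icc_left ha) fun j hj hj1 => hf j (by simp at hj hj1; omega)).symm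

theorem sum_Icc_one_two_mul_add (c : ℚ) {n : ℤ} (hn : 0 ≤ n) :
    ∑ j ∈ Icc 1 n, (2 * (j : ℚ) + c) = n * (n + 1 + c) := by
  induction n, hn using Int.leInduction with
  | base => simp
  | succ n hn ih =>
    rw [← insert_Icc_right_eq_Icc_add_one (by omega), sum_insert (by simp), ih]
    push_cast
    ring

end Int

theorem ellmer_recurrence_eq_partial_sum {ℓ : ℕ} {D : ℤ → ℚ} (h0 : ∀ L : ℤ, L ≤ 0 → D L = 0)
    {L : ℤ} (hL : 1 ≤ L) :
    ∑ k ∈ Icc (1 : ℤ) (L + ℓ - 1), (D (k - ℓ) + 1 + D (L - k)) =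
      2 * ∑ j ∈ Icc 1 (L - 1), D j + ((L : ℚ) + ℓ - 1) := by
  have hshift : ∑ k ∈ Icc (1 : ℤ) (L + ℓ - 1), D (k - ℓ) = ∑ j ∈ Icc 1 (L - 1), D j := by
    rw [Int.sum_Icc_comp_sub_right, Int.sum_Icc_eq_sum_Icc_one h0 (by omega),
      show L + ℓ - 1 - ℓ = L - 1 by ring]
  have hreflect : ∑ k ∈ Icc (1 : ℤ) (L + ℓ - 1), D (L - k) = ∑ j ∈ Icc 1 (L - 1), D j := by
    rw [Int.sum_Icc_comp_sub_left, Int.sum_Icc_eq_sum_Icc_one h0 (by omega)]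
  have hcard : ((Icc (1 : ℤ) (L + ℓ - 1)).card : ℚ) = (L : ℚ) + ℓ - 1 := by
    rw [Int.card_Icc, show L + ℓ - 1 + 1 - 1 = L + ℓ - 1 by ring, ← Int.cast_natCast,
      Int.toNat_of_nonneg (by omega)]
    push_cast
    ring
  rw [sum_add_distrib, sum_add_distrib, hshift, hreflect, sum_const, nsmul_one, hcard]
  ring

theorem ellmer_eq_of_eq_on_Icc {ℓ : ℕ} (hℓ : 1 ≤ ℓ) {D : ℤ → ℚ}
    (h0 : ∀ L : ℤ, L ≤ 0 → D L = 0) {L : ℤ} (hL : 1 ≤ L)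
    (hrec : ((L : ℚ) + ℓ - 1) * D L =
      ∑ k ∈ Icc (1 : ℤ) (L + ℓ - 1), (D (k - ℓ) + 1 + D (L - k)))
    (hprev : ∀ j ∈ Icc 1 (L - 1), D j = (2 * (j : ℚ) + ℓ - 1) / (ℓ + 1)) :
    D L = (2 * (L : ℚ) + ℓ - 1) / (ℓ + 1) := by
  have hsum : ∑ j ∈ Icc 1 (L - 1), D j = ((L : ℚ) - 1) * (L + ℓ - 1) / (ℓ + 1) := by
    rw [sum_congr rfl hprev, ← sum_div]
    simp_rw [add_sub_assoc]
    rw [Int.sum_Icc_one_two_mul_add _ (by omega)]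
    push_cast
    ring
  have hpos : (0 : ℚ) < L + ℓ - 1 := by
    have : (1 : ℚ) ≤ ℓ := by exact_mod_cast hℓ
    have : (1 : ℚ) ≤ L := by exact_mod_cast hL
    linarith
  rw [ellmer_recurrence_eq_partial_sum h0 hL, hsum] at hrec
  refine mul_left_cancel₀ hpos.ne' (hrec.trans ?_)
  field_simp
  ring

/-- Average number of `ℓ`-mers in random sequential covering of an interval of `L` sites:
with `D L = 0` for `L ≤ 0` and the recurrence
`(L+ℓ-1) D L = ∑_{k=1}^{L+ℓ-1} (D (k-ℓ) + 1 + D (L-k))`, one has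
`D L = (2L + ℓ - 1)/(ℓ + 1)` for all `L ≥ 1`. -/
theorem ellmer_average (ℓ : ℕ) (hℓ : 2 ≤ ℓ) (D : ℤ → ℚ)
    (h0 : ∀ L : ℤ, L ≤ 0 → D L = 0)
    (hrec : ∀ L : ℤ, 1 ≤ L →
      ((L : ℚ) + ℓ - 1) * D L =
        ∑ k ∈ Finset.Icc (1 : ℤ) (L + ℓ - 1), (D (k - ℓ) + 1 + D (L - k))) :
    ∀ L : ℤ, 1 ≤ L → D L = (2 * (L : ℚ) + ℓ - 1) / (ℓ + 1) := by
  have hupto : ∀ n : ℤ, 0 ≤ n → ∀ j ∈ Icc 1 n, D j = (2 * (j : ℚ) + ℓ - 1) / (ℓ + 1) := by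
    intro n hn
    induction n, hn using Int.leInduction with
    | base => simp
    | succ n hn ih =>
      rw [← insert_Icc_right_eq_Icc_add_one (by omega), forall_mem_insert]
      refine ⟨ellmer_eq_of_eq_on_Icc (by omega) h0 (by omega) (hrec _ (by omega)) ?_, ih⟩
      simpa using ih
  exact fun L hL => hupto L (by omega) L (by simp [hL])
end

section
/- Suppose π₂(0)=0 and dπ₂/dt = 2(1−e^{−t})·e^{−t}·e^{2e^{−t}−2}. Then π₂(t) = (1 − (3−2e^{−t})·e^{2e^{−t}−2})/2, and lim_{t→∞} π₂(t) = (1 − 3e^{−2})/2. Moreover, with π₀(t) = e^{−t}e^{2e^{−t}−2} and π₁ = 1 − π₀ − π₂, one has π₁(∞) = (1+3e^{−2})/2. -/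
/-!
In the variable `u = e^{-t}` the claimed `π₂` is `g u = (1 - (3 - 2u) e^{2u-2}) / 2`, with
`g' u = -2 (1 - u) e^{2u-2}`; by the chain rule `t ↦ g (e^{-t})` has the prescribed rate, and it
vanishes at `t = 0`, so it is `π₂`. As `t → ∞`, `u → 0`, so the limits are values at `u = 0`.
-/

open Real Filter

theorem eq_of_hasDerivAt_eq {𝕜 G : Type*} [RCLike 𝕜] [NormedAddCommGroup G] [NormedSpace 𝕜 G]
    {f g f' : 𝕜 → G} (hf : ∀ x, HasDerivAt f (f' x) x) (hg : ∀ x, HasDerivAt g (f' x) x)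
    (x₀ : 𝕜) (h₀ : f x₀ = g x₀) : f = g :=
  eq_of_fderiv_eq (fun x => (hf x).differentiableAt) (fun x => (hg x).differentiableAt)
    (fun x => by rw [(hf x).hasFDerivAt.fderiv, (hg x).hasFDerivAt.fderiv]) x₀ h₀

theorem tendsto_comp_exp_neg_atTop {X : Type*} [TopologicalSpace X] {g : ℝ → X}
    (hg : ContinuousAt g 0) : Tendsto (fun t => g (exp (-t))) atTop (nhds (g 0)) :=
  hg.tendsto.comp tendsto_exp_neg_atTop_nhds_zero

noncomputable def trimerDoubleCoveredProfile (u : ℝ) : ℝ :=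
  (1 - (3 - 2 * u) * exp (2 * u - 2)) / 2

theorem hasDerivAt_trimerDoubleCoveredProfile (u : ℝ) :
    HasDerivAt trimerDoubleCoveredProfile (-2 * (1 - u) * exp (2 * u - 2)) u := by
  have hexp : HasDerivAt (fun u => exp (2 * u - 2)) (exp (2 * u - 2) * 2) u :=
    (((hasDerivAt_id u).const_mul 2).sub_const 2).exp.congr_deriv (by simp [mul_comm])
  have hlin : HasDerivAt (fun u : ℝ => 3 - 2 * u) (-2) u :=
    ((hasDerivAt_id u).const_mul 2).const_sub 3 |>.congr_deriv (by ring)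
  exact ((hlin.mul hexp).const_sub 1).div_const 2 |>.congr_deriv (by ring)

theorem hasDerivAt_trimerDoubleCoveredProfile_exp_neg (t : ℝ) :
    HasDerivAt (fun t => trimerDoubleCoveredProfile (exp (-t)))
      (2 * (1 - exp (-t)) * exp (-t) * exp (2 * exp (-t) - 2)) t := by
  have hu : HasDerivAt (fun t => exp (-t)) (-exp (-t)) t :=
    (hasDerivAt_neg t).exp.congr_deriv (by ring)
  exact (hasDerivAt_trimerDoubleCoveredProfile _).comp t hu |>.congr_deriv (by ring)

/-- Model B random sequential covering of ℤ by trimers: the double-covered density obeys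
`π₂(0) = 0`, `π₂' = 2(1-e^{-t}) e^{-t} e^{2e^{-t}-2}`, hence
`π₂(t) = (1 - (3-2e^{-t}) e^{2e^{-t}-2})/2` with limit `(1-3e^{-2})/2`; and with
`π₀ = e^{-t} e^{2e^{-t}-2}`, `π₁ = 1 - π₀ - π₂`, one has `π₁(∞) = (1+3e^{-2})/2`. -/
theorem trimer_modelB_fractions (π₂ : ℝ → ℝ) (h0 : π₂ 0 = 0)
    (hode : ∀ t : ℝ, HasDerivAt π₂
      (2 * (1 - Real.exp (-t)) * Real.exp (-t) * Real.exp (2 * Real.exp (-t) - 2)) t) :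
    (∀ t : ℝ, π₂ t
        = (1 - (3 - 2 * Real.exp (-t)) * Real.exp (2 * Real.exp (-t) - 2)) / 2) ∧
    Tendsto π₂ atTop (nhds ((1 - 3 * Real.exp (-2)) / 2)) ∧
    Tendsto (fun t : ℝ =>
        1 - Real.exp (-t) * Real.exp (2 * Real.exp (-t) - 2) - π₂ t)
      atTop (nhds ((1 + 3 * Real.exp (-2)) / 2)) := by
  have hclosed : π₂ = fun t => trimerDoubleCoveredProfile (exp (-t)) :=
    eq_of_hasDerivAt_eq hode hasDerivAt_trimerDoubleCoveredProfile_exp_neg 0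
      (by norm_num [h0, trimerDoubleCoveredProfile])
  subst hclosed
  have hπ₂ : Tendsto (fun t => trimerDoubleCoveredProfile (exp (-t))) atTop
      (nhds ((1 - 3 * exp (-2)) / 2)) := by
    convert tendsto_comp_exp_neg_atTop (g := trimerDoubleCoveredProfile)
      (by unfold trimerDoubleCoveredProfile; fun_prop) using 2
    norm_num [trimerDoubleCoveredProfile]
  have hπ₀ : Tendsto (fun t => exp (-t) * exp (2 * exp (-t) - 2)) atTop (nhds 0) := by
    convert tendsto_comp_exp_neg_atTop (g := fun u => u * exp (2 * u - 2)) (by fun_prop) using 2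
    simp
  refine ⟨fun t => rfl, hπ₂, ?_⟩
  convert (tendsto_const_nhds (x := (1 : ℝ))).sub hπ₀ |>.sub hπ₂ using 2
  ring
end
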